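/- Let A be a unital associative k-algebra and let r, s ∈ A ⊗ A satisfy the associative Yang-Baxter pair equation r¹³r¹² − r¹²r²³ + s²³r¹³ = 0. Then the linear operators R(a) = Σ r⁽¹⁾ a r⁽²⁾ and S(a) = Σ s⁽¹⁾ a s⁽²⁾ satisfy, for all a, b ∈ A: R(a)R(b) − R(R(a)b) − R(aS(b)) equals the image of r¹³r¹² − r¹²r²³ + s²³r¹³ under the map sending x₁ ⊗ x₂ ⊗ x₃ to x₁ a x₂ b x₃; in particular this expression vanishes. -/

import Mathlib

/-!
Both sides are bilinear in the tensor legs, so it suffices to evaluate `psi a b` on the three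
products of pure tensors: `r¹³r¹²`, `r¹²r²³` and `s²³r¹³` are sent to `R(R(a)b)`, `R(a)R(b)` and
`R(aS(b))`. Hence `psi a b` maps the associative Yang–Baxter expression to minus the defect,
and both vanish when the expression does.
-/

open scoped TensorProduct

/-- `Fbil x y` is the operator `a ↦ x * a * y`. -/
noncomputable def Fbil (k A : Type*) [CommSemiring k] [Ring A] [Algebra k A] :
    A →ₗ[k] A →ₗ[k] (A →ₗ[k] A) :=
  LinearMap.mk₂ k (fun x y => (LinearMap.mulLeft k x).comp (LinearMap.mulRight k y))
    (fun x x' y => by ext a; simp [add_mul])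
    (fun c x y => by ext a; simp [smul_mul_assoc])
    (fun x y y' => by ext a; simp [mul_add])
    (fun c x y => by ext a; simp [mul_smul_comm])

/-- `F2 (Σ x ⊗ y)` is the operator `a ↦ Σ x * a * y`. -/
noncomputable def F2 (k A : Type*) [CommSemiring k] [Ring A] [Algebra k A] :
    A ⊗[k] A →ₗ[k] (A →ₗ[k] A) :=
  TensorProduct.lift (Fbil k A)

/-- `r ↦ r¹² = r ⊗ 1`. -/
noncomputable def e12 (k A : Type*) [CommSemiring k] [Ring A] [Algebra k A] :
    A ⊗[k] A →ₐ[k] (A ⊗[k] A) ⊗[k] A :=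
  Algebra.TensorProduct.includeLeft

/-- `a ⊗ b ↦ (a ⊗ b)¹³ = a ⊗ 1 ⊗ b`. -/
noncomputable def e13 (k A : Type*) [CommSemiring k] [Ring A] [Algebra k A] :
    A ⊗[k] A →ₐ[k] (A ⊗[k] A) ⊗[k] A :=
  Algebra.TensorProduct.map Algebra.TensorProduct.includeLeft (AlgHom.id k A)

/-- `r ↦ r²³ = 1 ⊗ r`. -/
noncomputable def e23 (k A : Type*) [CommSemiring k] [Ring A] [Algebra k A] :
    A ⊗[k] A →ₐ[k] (A ⊗[k] A) ⊗[k] A :=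
  Algebra.TensorProduct.map Algebra.TensorProduct.includeRight (AlgHom.id k A)

/-- `psi a b` sends `Σ x ⊗ y ⊗ z ∈ A⊗A⊗A` to `Σ x * a * y * b * z`. -/
noncomputable def psi (k A : Type*) [CommSemiring k] [Ring A] [Algebra k A] (a b : A) :
    (A ⊗[k] A) ⊗[k] A →ₗ[k] A :=
  TensorProduct.lift
    ((LinearMap.mul k A).comp ((LinearMap.mulRight k b).comp ((F2 k A).flip a)))

section YangBaxterOperators

variable {k A : Type*} [CommSemiring k] [Ring A] [Algebra k A]

@[simp]
lemma F2_tmul (x y a : A) : F2 k A (x ⊗ₜ y) a = x * a * y := by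
  simp [F2, Fbil, mul_assoc]

@[simp]
lemma psi_tmul (a b x y z : A) : psi k A a b (x ⊗ₜ y ⊗ₜ z) = x * a * y * b * z := by
  simp [psi]

lemma psi_e12_mul_e23 (a b : A) (r r' : A ⊗[k] A) :
    psi k A a b (e12 k A r * e23 k A r') = F2 k A r a * F2 k A r' b := by
  induction r using TensorProduct.induction_on with
  | zero => simp
  | add p q hp hq => simp [add_mul, hp, hq]
  | tmul x y =>
    induction r' using TensorProduct.induction_on with
    | zero => simp
    | add p q hp hq => simp [mul_add, hp, hq]
    | tmul u v => simp [e12, e23, mul_assoc]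

lemma psi_e13_mul_e12 (a b : A) (r r' : A ⊗[k] A) :
    psi k A a b (e13 k A r' * e12 k A r) = F2 k A r' (F2 k A r a * b) := by
  induction r using TensorProduct.induction_on with
  | zero => simp
  | add p q hp hq => simp [mul_add, add_mul, hp, hq]
  | tmul x y =>
    induction r' using TensorProduct.induction_on with
    | zero => simp
    | add p q hp hq => simp [add_mul, hp, hq]
    | tmul u v => simp [e12, e13, mul_assoc]

lemma psi_e23_mul_e13 (a b : A) (r s : A ⊗[k] A) :
    psi k A a b (e23 k A s * e13 k A r) = F2 k A r (a * F2 k A s b) := by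
  induction r using TensorProduct.induction_on with
  | zero => simp
  | add p q hp hq => simp [mul_add, hp, hq]
  | tmul x y =>
    induction s using TensorProduct.induction_on with
    | zero => simp
    | add p q hp hq => simp [add_mul, mul_add, hp, hq]
    | tmul u v => simp [e13, e23, mul_assoc]

lemma psi_associativeYangBaxter (a b : A) (r s : A ⊗[k] A) :
    psi k A a b (e13 k A r * e12 k A r - e12 k A r * e23 k A r + e23 k A s * e13 k A r) =
      -(F2 k A r a * F2 k A r b - F2 k A r (F2 k A r a * b) - F2 k A r (a * F2 k A s b)) := by
  rw [map_add, map_sub, psi_e12_mul_e23, psi_e13_mul_e12, psi_e23_mul_e13]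
  abel

end YangBaxterOperators

/-- For `R = F2 r`, `S = F2 s`, the defect `R(a)R(b) − R(R(a)b) − R(aS(b))` is the image of
`r¹³r¹² − r¹²r²³ + s²³r¹³` under `x₁⊗x₂⊗x₃ ↦ x₁ a x₂ b x₃`; in particular, if
`r¹³r¹² − r¹²r²³ + s²³r¹³ = 0` then it vanishes. -/
theorem stmt1 (k A : Type*) [Field k] [Ring A] [Algebra k A] (r s : A ⊗[k] A)
    (h1 : e13 k A r * e12 k A r - e12 k A r * e23 k A r + e23 k A s * e13 k A r = 0) :
    ∀ a b : A,
      F2 k A r a * F2 k A r b - F2 k A r (F2 k A r a * b) - F2 k A r (a * F2 k A s b)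
        = psi k A a b
            (e13 k A r * e12 k A r - e12 k A r * e23 k A r + e23 k A s * e13 k A r) ∧
      F2 k A r a * F2 k A r b - F2 k A r (F2 k A r a * b) - F2 k A r (a * F2 k A s b) = 0 := by
  intro a b
  have hdefect :
      F2 k A r a * F2 k A r b - F2 k A r (F2 k A r a * b) - F2 k A r (a * F2 k A s b) = 0 := by
    rw [← neg_eq_zero, ← psi_associativeYangBaxter, h1, map_zero]
  rw [h1, map_zero]
  exact ⟨hdefect, hdefect⟩
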